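/- For every positive integer L and every j in {0,...,2L-1}, the sum ∑_{l=0}^{L-1} (1/(2l+1)) · sin((2j+1)(2l+1)π/(4L)) equals (1/(4L)) · ∫_0^{(j+1/2)π} sin(u)/sin(u/(2L)) du. -/

import Mathlib

open MeasureTheory

/-!
Writing `v = u / (2L)`, the telescoping identity
`2 sin v cos ((2l+1) v) = sin ((2l+2) v) - sin (2l v)` gives
`sin u / sin v = ∑_{l<L} 2 cos ((2l+1) v)` wherever `sin v ≠ 0`, hence almost everywhere.
Integrating this trigonometric polynomial term by term yields the sum.
-/

open Real

theorem sin_two_mul_nat_mul_eq_sum (n : ℕ) (v : ℝ) :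
    sin (2 * n * v) = ∑ l ∈ Finset.range n, 2 * sin v * cos ((2 * l + 1) * v) := by
  induction n with
  | zero => simp
  | succ n ih =>
    rw [Finset.sum_range_succ, ← ih]
    have hsum : 2 * ((n + 1 : ℕ) : ℝ) * v = (2 * n + 1) * v + v := by push_cast; ring
    have hdiff : 2 * (n : ℝ) * v = (2 * n + 1) * v - v := by ring
    rw [hsum, hdiff, sin_add, sin_sub]
    ring

theorem sin_two_mul_nat_mul_div_sin (n : ℕ) {v : ℝ} (hv : sin v ≠ 0) :
    sin (2 * n * v) / sin v = ∑ l ∈ Finset.range n, 2 * cos ((2 * l + 1) * v) := by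
  rw [div_eq_iff hv, Finset.sum_mul, sin_two_mul_nat_mul_eq_sum]
  exact Finset.sum_congr rfl fun l _ => by ring

theorem ae_sin_div_ne_zero {c : ℝ} (hc : c ≠ 0) : ∀ᵐ u : ℝ, sin (u / c) ≠ 0 := by
  have hzeros : {u : ℝ | sin (u / c) = 0} ⊆ Set.range fun k : ℤ => c * (k * π) := by
    intro u hu
    obtain ⟨k, hk⟩ := sin_eq_zero_iff.1 hu
    exact ⟨k, by simp only [hk]; field_simp⟩
  exact measure_mono_null (fun u hu => hzeros (not_not.1 hu))
    ((Set.countable_range _).measure_zero volume)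

theorem integral_cos_mul {c : ℝ} (hc : c ≠ 0) (a b : ℝ) :
    ∫ u in a..b, cos (c * u) = (sin (c * b) - sin (c * a)) / c := by
  rw [intervalIntegral.integral_comp_mul_left _ hc, integral_cos, smul_eq_mul, inv_mul_eq_div]

theorem integral_sin_div_sin_div_two_mul_nat (n : ℕ) (hn : n ≠ 0) (a b : ℝ) :
    ∫ u in a..b, sin u / sin (u / (2 * n)) =
      ∑ l ∈ Finset.range n, 4 * n / (2 * l + 1) *
        (sin ((2 * l + 1) / (2 * n) * b) - sin ((2 * l + 1) / (2 * n) * a)) := by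
  have h2n : (2 * n : ℝ) ≠ 0 := by positivity
  have hdirichlet : ∀ᵐ u : ℝ, u ∈ Set.uIoc a b → sin u / sin (u / (2 * n)) =
      ∑ l ∈ Finset.range n, 2 * cos ((2 * l + 1) / (2 * n) * u) := by
    filter_upwards [ae_sin_div_ne_zero h2n] with u hu _
    calc sin u / sin (u / (2 * n)) = sin (2 * n * (u / (2 * n))) / sin (u / (2 * n)) := by
          rw [mul_div_cancel₀ u h2n]
      _ = ∑ l ∈ Finset.range n, 2 * cos ((2 * l + 1) * (u / (2 * n))) :=
          sin_two_mul_nat_mul_div_sin n hu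
      _ = _ := Finset.sum_congr rfl fun l _ => by ring_nf
  rw [intervalIntegral.integral_congr_ae hdirichlet,
    intervalIntegral.integral_finsetSum fun l _ =>
      (by fun_prop : Continuous _).intervalIntegrable _ _]
  refine Finset.sum_congr rfl fun l _ => ?_
  rw [intervalIntegral.integral_const_mul, integral_cos_mul (by positivity)]
  field_simp
  ring

theorem sum_eq_integral (L : ℕ) (hL : 1 ≤ L) (j : ℕ) :
    ∑ l ∈ Finset.range L, (1 / (2 * (l : ℝ) + 1)) *
      Real.sin ((2 * (j : ℝ) + 1) * (2 * (l : ℝ) + 1) * Real.pi / (4 * (L : ℝ)))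
      = (1 / (4 * (L : ℝ))) *
        ∫ u in (0:ℝ)..(((j : ℝ) + 1/2) * Real.pi),
          Real.sin u / Real.sin (u / (2 * (L : ℝ))) := by
  have hL₀ : L ≠ 0 := Nat.one_le_iff_ne_zero.1 hL
  rw [integral_sin_div_sin_div_two_mul_nat L hL₀, Finset.mul_sum]
  refine Finset.sum_congr rfl fun l _ => ?_
  have harg : (2 * l + 1) / (2 * L) * ((j + 1 / 2) * π) =
      (2 * j + 1) * (2 * l + 1) * π / (4 * L) := by
    field_simp
    ring
  rw [harg, mul_zero, sin_zero, sub_zero]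
  field_simp
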